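/- arXiv:math/0506325 — 5 statements merged into one kernel-verified Lean document; each statement's English description precedes it below -/
import Mathlib

section
/- Let N be a positive integer, let A, B, C be integers with A > 0, gcd(A,B,C) = 1 and D := B² − 4AC < 0, and let τ be the root of A·τ² + B·τ + C = 0 lying in the complex upper half-plane. Then there exist integers A', B', C' with A' > 0, gcd(A',B',C') = 1, B'² − 4A'C' = D, and A'·(Nτ)² + B'·(Nτ) + C' = 0 if and only if N ∣ A and gcd(A/N, B, C·N) = 1. -/
private lemma quad_parts (a b c : ℤ) (z : ℂ) (h : (a:ℂ)*z^2 + b*z + c = 0) :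
    ((a:ℝ)*(z.re^2 - z.im^2) + b*z.re + c = 0) ∧ ((a:ℝ)*(2*z.re*z.im) + b*z.im = 0) := by
  rw [Complex.ext_iff] at h
  simp only [Complex.add_re, Complex.add_im, Complex.mul_re, Complex.mul_im, pow_two,
    Complex.intCast_re, Complex.intCast_im, Complex.zero_re, Complex.zero_im] at h
  obtain ⟨h1, h2⟩ := h
  constructor <;> nlinarith [h1, h2]

/-- **Characterization of Heegner points.**
Let `N` be a positive integer, `A, B, C` integers with `A > 0`, `gcd(A,B,C) = 1`
and `D = B² − 4AC < 0`, and let `τ` be the root of `Aτ² + Bτ + C = 0` in the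
upper half-plane.  Then `Nτ` is the root of an integral primitive form of the
same discriminant `D` iff `N ∣ A` and `gcd(A/N, B, CN) = 1`. -/
theorem heegner_point_characterization
    (N A B C : ℤ) (hN : 0 < N) (hA : 0 < A)
    (hgcd : Int.gcd A (Int.gcd B C : ℤ) = 1)
    (hD : B ^ 2 - 4 * A * C < 0)
    (τ : ℂ) (hτ : 0 < τ.im)
    (hroot : (A : ℂ) * τ ^ 2 + (B : ℂ) * τ + (C : ℂ) = 0) :
    (∃ A' B' C' : ℤ, 0 < A' ∧ Int.gcd A' (Int.gcd B' C' : ℤ) = 1 ∧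
        B' ^ 2 - 4 * A' * C' = B ^ 2 - 4 * A * C ∧
        (A' : ℂ) * ((N : ℂ) * τ) ^ 2 + (B' : ℂ) * ((N : ℂ) * τ) + (C' : ℂ) = 0) ↔
      (N ∣ A ∧ Int.gcd (A / N) (Int.gcd B (C * N) : ℤ) = 1) := by
  set x := τ.re with hxdef
  set y := τ.im with hydef
  have hy0 : (0:ℝ) < y := hτ
  obtain ⟨h1, h2⟩ := quad_parts A B C τ hroot
  -- 2*A*x + B = 0
  have hx : 2*(A:ℝ)*x + B = 0 := by
    have : ((2*(A:ℝ)*x + B)) * y = 0 := by ring_nf; ring_nf at h2; linarith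
    rcases mul_eq_zero.mp this with h | h
    · exact h
    · exact absurd h (ne_of_gt hy0)
  have hy : 4*(A:ℝ)^2*y^2 = 4*A*C - B^2 := by
    linear_combination (-4*(A:ℝ))*h1 + (2*(A:ℝ)*x + B)*hx
  constructor
  · rintro ⟨A', B', C', hA', hgcd', hdisc, hroot'⟩
    obtain ⟨h1', h2'⟩ := quad_parts A' B' C' ((N:ℂ)*τ) hroot'
    have hre : ((N:ℂ)*τ).re = (N:ℝ)*x := by simp [Complex.mul_re, hxdef]
    have him : ((N:ℂ)*τ).im = (N:ℝ)*y := by simp [Complex.mul_im, hydef]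
    rw [hre, him] at h1' h2'
    have hNy0 : (0:ℝ) < (N:ℝ)*y := by positivity
    have hx' : 2*(A':ℝ)*((N:ℝ)*x) + B' = 0 := by
      have : ((2*(A':ℝ)*((N:ℝ)*x) + B')) * ((N:ℝ)*y) = 0 := by ring_nf; ring_nf at h2'; linarith
      rcases mul_eq_zero.mp this with h | h
      · exact h
      · exact absurd h (ne_of_gt hNy0)
    -- A * B' = A' * N * B
    have hBr : (A:ℝ) * B' = A' * N * B := by
      linear_combination (A:ℝ)*hx' - ((A':ℝ)*(N:ℝ))*hx
    have hBz : A * B' = A' * N * B := by exact_mod_cast hBr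
    -- A^2 * C' = A * (A' * N^2 * C)
    have hCr : (A:ℝ)^2 * C' = A * (A' * N^2 * C) := by
      linear_combination ((A:ℝ)^2)*h1' + ((A':ℝ)*(N:ℝ)^2/4)*hy
        + (-(A':ℝ)*(N:ℝ)^2*((B:ℝ) - 2*A*x)/4)*hx + (-(A:ℝ)^2*(N:ℝ)*x)*hx'
    have hCz2 : A^2 * C' = A * (A' * N^2 * C) := by exact_mod_cast hCr
    have hA0 : (A:ℤ) ≠ 0 := ne_of_gt hA
    have hCz : A * C' = A' * N^2 * C := by
      have := hCz2
      rw [pow_two, mul_assoc] at this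
      exact mul_left_cancel₀ hA0 this
    -- (A'*N)^2 = A^2
    have hkey : (A'*N)^2 * (B^2 - 4*A*C) = A^2 * (B^2 - 4*A*C) := by
      linear_combination (-(A*B' + A'*N*B))*hBz + (4*A'*A)*hCz + (A^2)*hdisc
    have hD0 : B^2 - 4*A*C ≠ 0 := ne_of_lt hD
    have hsq : (A'*N)^2 = A^2 := mul_right_cancel₀ hD0 hkey
    have hAN : A' * N = A := by
      have hz : (A'*N - A) * (A'*N + A) = 0 := by linear_combination hsq
      rcases mul_eq_zero.mp hz with h | h
      · linarith
      · nlinarith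
    have hBeq : B' = B := by
      have : A * B' = A * B := by rw [hBz, hAN]
      exact mul_left_cancel₀ hA0 this
    have hCeq : C' = C * N := by
      have : A * C' = A * (C * N) := by
        rw [hCz]; rw [← hAN]; ring
      exact mul_left_cancel₀ hA0 this
    refine ⟨⟨A', hAN.symm ▸ (mul_comm A' N ▸ rfl)⟩, ?_⟩
    have hdiv : A / N = A' := by
      rw [← hAN, Int.mul_ediv_cancel _ (ne_of_gt hN)]
    rw [hdiv, ← hBeq, ← hCeq]
    exact hgcd'
  · rintro ⟨⟨k, hk⟩, hgcd'⟩
    have hk0 : 0 < k := by nlinarith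
    have hdiv : A / N = k := by rw [hk, Int.mul_ediv_cancel_left _ (ne_of_gt hN)]
    refine ⟨k, B, C*N, hk0, ?_, by linear_combination 4*C*hk, ?_⟩
    · rw [hdiv] at hgcd'; exact hgcd'
    · have hAc : (A:ℂ) = (N:ℂ)*(k:ℂ) := by exact_mod_cast congrArg (Int.cast : ℤ → ℂ) hk
      push_cast
      linear_combination (N:ℂ)*hroot - (N:ℂ)*τ^2*hAc
end

section
/- Let N be a positive integer, D a negative integer, and let (A,B,C) be a Heegner form of level N and discriminant D. Then for every γ ∈ Γ₀(N), the transformed form (A,B,C)·γ is again a Heegner form of level N and discriminant D; that is, the set of Heegner forms of level N and discriminant D is closed under the action of Γ₀(N). -/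
/-- A Heegner form of level `N` and discriminant `D`: an integral binary quadratic
form `(A,B,C)` with `A > 0`, `gcd(A,B,C) = 1`, `B² − 4AC = D`, `N ∣ A` and
`gcd(A/N, B, CN) = 1`. -/
def IsHeegnerForm (N D A B C : ℤ) : Prop :=
  0 < A ∧ Int.gcd A (Int.gcd B C : ℤ) = 1 ∧ B ^ 2 - 4 * A * C = D ∧ N ∣ A ∧
    Int.gcd (A / N) (Int.gcd B (C * N) : ℤ) = 1

/-- Primitivity of a binary quadratic form is preserved under the SL₂ action. -/
lemma gcd_act (A B C a b c d : ℤ) (hdet : a * d - b * c = 1)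
    (h : Int.gcd A (Int.gcd B C : ℤ) = 1) :
    Int.gcd (A * a ^ 2 + B * a * c + C * c ^ 2)
      (Int.gcd (2 * A * a * b + B * (a * d + b * c) + 2 * C * c * d)
        (A * b ^ 2 + B * b * d + C * d ^ 2) : ℤ) = 1 := by
  set A1 := A * a ^ 2 + B * a * c + C * c ^ 2 with hA1
  set B1 := 2 * A * a * b + B * (a * d + b * c) + 2 * C * c * d with hB1
  set C1 := A * b ^ 2 + B * b * d + C * d ^ 2 with hC1
  set g := Int.gcd A1 (Int.gcd B1 C1 : ℤ) with hg
  have hgA1 : (g : ℤ) ∣ A1 := Int.gcd_dvd_left _ _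
  have hgB1 : (g : ℤ) ∣ B1 :=
    dvd_trans (Int.gcd_dvd_right _ _) (Int.gcd_dvd_left _ _)
  have hgC1 : (g : ℤ) ∣ C1 :=
    dvd_trans (Int.gcd_dvd_right _ _) (Int.gcd_dvd_right _ _)
  have kA : A * (a * d - b * c) ^ 2 = A1 * d ^ 2 - B1 * (c * d) + C1 * c ^ 2 := by
    rw [hA1, hB1, hC1]; ring
  have kB : B * (a * d - b * c) ^ 2 =
      -(2 * A1 * (b * d)) + B1 * (a * d + b * c) - 2 * C1 * (a * c) := by
    rw [hA1, hB1, hC1]; ring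
  have kC : C * (a * d - b * c) ^ 2 = A1 * b ^ 2 - B1 * (a * b) + C1 * a ^ 2 := by
    rw [hA1, hB1, hC1]; ring
  rw [hdet, one_pow, mul_one] at kA kB kC
  have hgA : (g : ℤ) ∣ A := by
    rw [kA]; exact dvd_add (dvd_sub (hgA1.mul_right _) (hgB1.mul_right _)) (hgC1.mul_right _)
  have hgB : (g : ℤ) ∣ B := by
    rw [kB]
    refine dvd_sub (dvd_add (dvd_neg.mpr ?_) ?_) ?_
    · exact (hgA1.mul_left 2).mul_right _
    · exact hgB1.mul_right _
    · exact (hgC1.mul_left 2).mul_right _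
  have hgC : (g : ℤ) ∣ C := by
    rw [kC]; exact dvd_add (dvd_sub (hgA1.mul_right _) (hgB1.mul_right _)) (hgC1.mul_right _)
  have hg1 : (g : ℤ) ∣ ((1 : ℕ) : ℤ) := by
    rw [← h]; exact Int.dvd_coe_gcd hgA (Int.dvd_coe_gcd hgB hgC)
  exact Nat.dvd_one.mp (Int.natCast_dvd_natCast.mp hg1)

/-- The set of Heegner forms of level `N` and discriminant `D` is closed under
the right action of `Γ₀(N)`: for `γ = [[a,b],[c,d]] ∈ SL₂(ℤ)` with `N ∣ c`,
the transformed form `(A,B,C)·γ` is again a Heegner form of level `N` and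
discriminant `D`. -/
theorem heegner_forms_closed_under_Gamma0
    (N D A B C : ℤ) (hN : 0 < N) (hD : D < 0)
    (h : IsHeegnerForm N D A B C)
    (a b c d : ℤ) (hdet : a * d - b * c = 1) (hc : N ∣ c) :
    IsHeegnerForm N D
      (A * a ^ 2 + B * a * c + C * c ^ 2)
      (2 * A * a * b + B * (a * d + b * c) + 2 * C * c * d)
      (A * b ^ 2 + B * b * d + C * d ^ 2) := by
  obtain ⟨hApos, hprim, hdisc, hNA, hprim2⟩ := h
  obtain ⟨c₀, rfl⟩ := hc
  obtain ⟨A₀, rfl⟩ := hNA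
  have hNne : N ≠ 0 := hN.ne'
  have hA0 : N * A₀ / N = A₀ := Int.mul_ediv_cancel_left _ hNne
  refine ⟨?_, ?_, ?_, ?_, ?_⟩
  · -- positivity
    rcases eq_or_ne c₀ 0 with rfl | hc0
    · have ha : a ≠ 0 := by
        rintro rfl; simp at hdet
      have : 0 < a ^ 2 := by positivity
      nlinarith
    · have hcne : N * c₀ ≠ 0 := mul_ne_zero hNne hc0
      have key : 4 * (N * A₀) * (N * A₀ * a ^ 2 + B * a * (N * c₀) + C * (N * c₀) ^ 2)
          = (2 * (N * A₀) * a + B * (N * c₀)) ^ 2 - D * (N * c₀) ^ 2 := by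
        linear_combination (-((N*c₀)^2)) * hdisc
      have h1 : 0 < -D * (N * c₀) ^ 2 :=
        mul_pos (by linarith) (by positivity)
      nlinarith [sq_nonneg (2 * (N * A₀) * a + B * (N * c₀)), h1]
  · exact gcd_act _ _ _ _ _ _ _ hdet hprim
  · have key : (2 * (N * A₀) * a * b + B * (a * d + b * (N * c₀)) + 2 * C * (N * c₀) * d) ^ 2
        - 4 * (N * A₀ * a ^ 2 + B * a * (N * c₀) + C * (N * c₀) ^ 2)
          * (N * A₀ * b ^ 2 + B * b * d + C * d ^ 2)
        = (B ^ 2 - 4 * (N * A₀) * C) * (a * d - b * (N * c₀)) ^ 2 := by ring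
    rw [hdet, hdisc] at key; simpa using key
  · exact ⟨A₀ * a ^ 2 + B * a * c₀ + C * N * c₀ ^ 2, by ring⟩
  · rw [hA0] at hprim2
    have := gcd_act A₀ B (C * N) a (b * N) c₀ d (by linarith) hprim2
    have e1 : (N * A₀ * a ^ 2 + B * a * (N * c₀) + C * (N * c₀) ^ 2) / N
        = A₀ * a ^ 2 + B * a * c₀ + C * N * c₀ ^ 2 := by
      rw [show N * A₀ * a ^ 2 + B * a * (N * c₀) + C * (N * c₀) ^ 2
        = N * (A₀ * a ^ 2 + B * a * c₀ + C * N * c₀ ^ 2) by ring,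
        Int.mul_ediv_cancel_left _ hNne]
    rw [e1]
    convert this using 3
    ring
end

section
/- Let N be a positive integer, D a negative fundamental discriminant, and β an integer with β² ≡ D (mod 4N). Then every primitive positive-definite integral binary quadratic form f of discriminant D is SL₂(ℤ)-equivalent to a form (A,B,C) with N ∣ A, B ≡ β (mod 2N), and gcd(A/N, B, C·N) = 1; that is, every SL₂(ℤ)-class of primitive positive-definite forms of discriminant D contains a Heegner form of level N and discriminant D whose middle coefficient is congruent to β modulo 2N. -/
/-- A negative fundamental discriminant. -/
def IsFundamentalDiscriminant (D : ℤ) : Prop :=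
  D < 0 ∧ ((D % 4 = 1 ∧ Squarefree D) ∨
    (D % 4 = 0 ∧ Squarefree (D / 4) ∧ (D / 4 % 4 = 2 ∨ D / 4 % 4 = 3)))

lemma exists_prime_dvd (x y : ℤ) (h : Int.gcd x y ≠ 1) :
    ∃ p : ℕ, p.Prime ∧ (p : ℤ) ∣ x ∧ (p : ℤ) ∣ y := by
  obtain ⟨p, hp, hpd⟩ := Nat.exists_prime_and_dvd h
  exact ⟨p, hp, dvd_trans (Int.natCast_dvd_natCast.mpr hpd) (Int.gcd_dvd_left _ _),
    dvd_trans (Int.natCast_dvd_natCast.mpr hpd) (Int.gcd_dvd_right _ _)⟩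

lemma exists_rep (A B C m : ℤ) (hm : 0 < m)
    (hprim : Int.gcd A (Int.gcd B C : ℤ) = 1) :
    ∃ a c : ℤ, 0 < c ∧ IsCoprime a c ∧
      Int.gcd (A * a ^ 2 + B * a * c + C * c ^ 2) m = 1 := by
  classical
  set S := m.natAbs.primeFactors with hS
  set Sc := S.filter (fun p : ℕ => ¬ (p : ℤ) ∣ A) with hSc
  set Sa := S.filter (fun p : ℕ => (p : ℤ) ∣ A ∧ ¬ (p : ℤ) ∣ C) with hSa
  set c₀ : ℤ := ∏ p ∈ Sc, (p : ℤ) with hc₀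
  set a₀ : ℤ := ∏ p ∈ Sa, (p : ℤ) with ha₀
  have hprimeS : ∀ p : ℕ, p ∈ S → p.Prime := fun p hp => Nat.prime_of_mem_primeFactors hp
  have hc₀pos : 0 < c₀ := Finset.prod_pos (fun p hp => by
    exact_mod_cast (hprimeS p (Finset.mem_filter.mp hp).1).pos)
  have hmemS : ∀ p : ℕ, p.Prime → (p : ℤ) ∣ m → p ∈ S := by
    intro p hp hdvd
    rw [hS, Nat.mem_primeFactors]
    exact ⟨hp, Int.natCast_dvd.mp hdvd, Int.natAbs_ne_zero.mpr (ne_of_gt hm)⟩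
  have hmem_c₀ : ∀ p : ℕ, p.Prime → (p : ℤ) ∣ c₀ → p ∈ Sc := by
    intro p hp hd
    obtain ⟨q, hq, hpq⟩ := ((Nat.prime_iff_prime_int.mp hp).dvd_finset_prod_iff
      (fun x : ℕ => (x : ℤ))).mp hd
    have hqP : Nat.Prime q := hprimeS q (Finset.mem_filter.mp hq).1
    have : p = q := (Nat.prime_dvd_prime_iff_eq hp hqP).mp (Int.natCast_dvd_natCast.mp hpq)
    rwa [this]
  have hmem_a₀ : ∀ p : ℕ, p.Prime → (p : ℤ) ∣ a₀ → p ∈ Sa := by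
    intro p hp hd
    obtain ⟨q, hq, hpq⟩ := ((Nat.prime_iff_prime_int.mp hp).dvd_finset_prod_iff
      (fun x : ℕ => (x : ℤ))).mp hd
    have hqP : Nat.Prime q := hprimeS q (Finset.mem_filter.mp hq).1
    have : p = q := (Nat.prime_dvd_prime_iff_eq hp hqP).mp (Int.natCast_dvd_natCast.mp hpq)
    rwa [this]
  have hcop : IsCoprime a₀ c₀ := by
    rw [Int.isCoprime_iff_gcd_eq_one]
    by_contra h
    obtain ⟨p, hp, hpa, hpc⟩ := exists_prime_dvd _ _ h
    have h1 := Finset.mem_filter.mp (hmem_a₀ p hp hpa)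
    have h2 := Finset.mem_filter.mp (hmem_c₀ p hp hpc)
    exact h2.2 h1.2.1
  refine ⟨a₀, c₀, hc₀pos, hcop, ?_⟩
  by_contra h
  obtain ⟨p, hp, hpf, hpm⟩ := exists_prime_dvd _ _ h
  have hpS : p ∈ S := hmemS p hp hpm
  have hpz : Prime (p : ℤ) := Nat.prime_iff_prime_int.mp hp
  by_cases hpA : (p : ℤ) ∣ A
  · by_cases hpC : (p : ℤ) ∣ C
    · have hpB : ¬ (p : ℤ) ∣ B := by
        intro hpB
        have : (p : ℤ) ∣ (Int.gcd A (Int.gcd B C : ℤ) : ℤ) :=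
          Int.dvd_coe_gcd hpA (Int.dvd_coe_gcd hpB hpC)
        rw [hprim] at this
        exact hp.one_lt.ne' (by exact_mod_cast Int.eq_one_of_dvd_one (by positivity) this)
      have hpa : ¬ (p : ℤ) ∣ a₀ := fun hd =>
        (Finset.mem_filter.mp (hmem_a₀ p hp hd)).2.2 hpC
      have hpc : ¬ (p : ℤ) ∣ c₀ := fun hd =>
        (Finset.mem_filter.mp (hmem_c₀ p hp hd)).2 hpA
      have : (p : ℤ) ∣ B * a₀ * c₀ := by
        have h1 : (p:ℤ) ∣ A * a₀ ^ 2 := Dvd.dvd.mul_right hpA _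
        have h2 : (p:ℤ) ∣ C * c₀ ^ 2 := Dvd.dvd.mul_right hpC _
        have := dvd_sub (dvd_sub hpf h1) h2
        rwa [show A * a₀ ^ 2 + B * a₀ * c₀ + C * c₀ ^ 2 - A * a₀ ^ 2 - C * c₀ ^ 2
          = B * a₀ * c₀ by ring] at this
      rcases hpz.dvd_mul.mp this with h' | h'
      · rcases hpz.dvd_mul.mp h' with h'' | h''
        · exact hpB h''
        · exact hpa h''
      · exact hpc h'
    · have hpa : (p : ℤ) ∣ a₀ := Finset.dvd_prod_of_mem _
        (by rw [hSa]; exact Finset.mem_filter.mpr ⟨hpS, hpA, hpC⟩)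
      have hpc : ¬ (p : ℤ) ∣ c₀ := fun hd =>
        (Finset.mem_filter.mp (hmem_c₀ p hp hd)).2 hpA
      have : (p : ℤ) ∣ C * c₀ ^ 2 := by
        have h1 : (p:ℤ) ∣ A * a₀ ^ 2 := Dvd.dvd.mul_right hpA _
        have h2 : (p:ℤ) ∣ B * a₀ * c₀ :=
          Dvd.dvd.mul_right (Dvd.dvd.mul_left hpa B) c₀
        have := dvd_sub (dvd_sub hpf h1) h2
        rwa [show A * a₀ ^ 2 + B * a₀ * c₀ + C * c₀ ^ 2 - A * a₀ ^ 2 - B * a₀ * c₀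
          = C * c₀ ^ 2 by ring] at this
      rcases hpz.dvd_mul.mp this with h' | h'
      · exact hpC h'
      · exact hpc (hpz.dvd_of_dvd_pow h')
  · have hpc : (p : ℤ) ∣ c₀ := Finset.dvd_prod_of_mem _
      (by rw [hSc]; exact Finset.mem_filter.mpr ⟨hpS, hpA⟩)
    have hpa : ¬ (p : ℤ) ∣ a₀ := fun hd =>
      hpA (Finset.mem_filter.mp (hmem_a₀ p hp hd)).2.1
    have : (p : ℤ) ∣ A * a₀ ^ 2 := by
      have h2 : (p:ℤ) ∣ B * a₀ * c₀ := Dvd.dvd.mul_left hpc _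
      have h3 : (p:ℤ) ∣ C * c₀ ^ 2 := Dvd.dvd.mul_left (dvd_pow hpc (by norm_num)) C
      have := dvd_sub (dvd_sub hpf h2) h3
      rwa [show A * a₀ ^ 2 + B * a₀ * c₀ + C * c₀ ^ 2 - B * a₀ * c₀ - C * c₀ ^ 2
        = A * a₀ ^ 2 by ring] at this
    rcases hpz.dvd_mul.mp this with h' | h'
    · exact hpA h'
    · exact hpa (hpz.dvd_of_dvd_pow h')

lemma act_gcd (A B C a b c d : ℤ) (h : a * d - b * c = 1) :
    Int.gcd (A * a ^ 2 + B * a * c + C * c ^ 2)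
      (Int.gcd (2 * A * a * b + B * (a * d + b * c) + 2 * C * c * d)
        (A * b ^ 2 + B * b * d + C * d ^ 2) : ℤ)
      ∣ Int.gcd A (Int.gcd B C : ℤ) := by
  set A' := A * a ^ 2 + B * a * c + C * c ^ 2 with hA'
  set B' := 2 * A * a * b + B * (a * d + b * c) + 2 * C * c * d with hB'
  set C' := A * b ^ 2 + B * b * d + C * d ^ 2 with hC'
  set g := Int.gcd A' (Int.gcd B' C' : ℤ) with hg
  have hg1 : (g : ℤ) ∣ A' := (Int.gcd_dvd_left _ _)
  have hg0 : (g : ℤ) ∣ (Int.gcd B' C' : ℤ) := (Int.gcd_dvd_right _ _)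
  have hg2 : (g : ℤ) ∣ B' := hg0.trans (Int.gcd_dvd_left _ _)
  have hg3 : (g : ℤ) ∣ C' := hg0.trans (Int.gcd_dvd_right _ _)
  have keyA : A = A' * d ^ 2 - B' * (c * d) + C' * c ^ 2 := by
    rw [hA', hB', hC']; linear_combination (-(A * (a * d - b * c + 1))) * h
  have keyB : B = -2 * A' * (b * d) + B' * (a * d + b * c) - 2 * C' * (a * c) := by
    rw [hA', hB', hC']; linear_combination (-(B * (a * d - b * c + 1))) * h
  have keyC : C = A' * b ^ 2 - B' * (a * b) + C' * a ^ 2 := by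
    rw [hA', hB', hC']; linear_combination (-(C * (a * d - b * c + 1))) * h
  have hdA : (g : ℤ) ∣ A := by
    rw [keyA]; exact dvd_add (dvd_sub (hg1.mul_right _) (hg2.mul_right _)) (hg3.mul_right _)
  have hdB : (g : ℤ) ∣ B := by
    rw [keyB]
    exact dvd_sub (dvd_add (by exact (hg1.mul_left _).mul_right _) (hg2.mul_right _))
      (by exact (hg3.mul_left _).mul_right _)
  have hdC : (g : ℤ) ∣ C := by
    rw [keyC]; exact dvd_add (dvd_sub (hg1.mul_right _) (hg2.mul_right _)) (hg3.mul_right _)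
  exact Int.natCast_dvd_natCast.mp (Int.dvd_coe_gcd hdA (Int.dvd_coe_gcd hdB hdC))

set_option maxHeartbeats 1000000 in
/-- Every `SL₂(ℤ)`-class of primitive positive-definite forms of negative
fundamental discriminant `D` contains a Heegner form of level `N` and
discriminant `D` whose middle coefficient is congruent to `β` modulo `2N`,
where `β² ≡ D (mod 4N)`. -/
theorem class_contains_heegner_form
    (N D β : ℤ) (hN : 0 < N)
    (hfund : IsFundamentalDiscriminant D)
    (hβ : β ^ 2 ≡ D [ZMOD 4 * N])
    (A B C : ℤ) (hA : 0 < A)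
    (hgcd : Int.gcd A (Int.gcd B C : ℤ) = 1)
    (hdisc : B ^ 2 - 4 * A * C = D) :
    ∃ a b c d : ℤ, a * d - b * c = 1 ∧
      IsHeegnerForm N D
        (A * a ^ 2 + B * a * c + C * c ^ 2)
        (2 * A * a * b + B * (a * d + b * c) + 2 * C * c * d)
        (A * b ^ 2 + B * b * d + C * d ^ 2) ∧
      2 * A * a * b + B * (a * d + b * c) + 2 * C * c * d ≡ β [ZMOD 2 * N] := by
  obtain ⟨hDneg, hDfund⟩ := hfund
  have hm2 : (0:ℤ) < 2 * N := by linarith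
  obtain ⟨a₁, c₁, hc₁pos, hcop1, hgcd1⟩ := exists_rep A B C (2 * N) hm2 hgcd
  obtain ⟨u₁, v₁, huv₁⟩ := hcop1
  set b₁ : ℤ := -v₁ with hb₁def
  set d₁ : ℤ := u₁ with hd₁def
  have hdet1 : a₁ * d₁ - b₁ * c₁ = 1 := by
    rw [hb₁def, hd₁def]; linear_combination huv₁
  set A₁ := A * a₁ ^ 2 + B * a₁ * c₁ + C * c₁ ^ 2 with hA₁def
  set B₁ := 2 * A * a₁ * b₁ + B * (a₁ * d₁ + b₁ * c₁) + 2 * C * c₁ * d₁ with hB₁def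
  set C₁ := A * b₁ ^ 2 + B * b₁ * d₁ + C * d₁ ^ 2 with hC₁def
  have hdisc1 : B₁ ^ 2 - 4 * A₁ * C₁ = D := by
    rw [hA₁def, hB₁def, hC₁def]
    linear_combination ((a₁ * d₁ - b₁ * c₁ + 1) * (B ^ 2 - 4 * A * C)) * hdet1 + hdisc
  have hA1pos : 0 < A₁ := by
    rw [hA₁def]
    have h1 : (1:ℤ) ≤ c₁ := hc₁pos
    nlinarith [sq_nonneg (2 * A * a₁ + B * c₁), sq_nonneg c₁, mul_pos hc₁pos hc₁pos]
  have hcopA1 : IsCoprime A₁ (2 * N) := Int.isCoprime_iff_gcd_eq_one.mpr hgcd1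
  have hcopA1N : IsCoprime A₁ N := hcopA1.of_mul_right_right
  -- parity : 2 ∣ β + B₁
  have hββ : (2:ℤ) ∣ β ^ 2 - B₁ ^ 2 := by
    have h4 : β ^ 2 ≡ D [ZMOD 4] := hβ.of_dvd ⟨N, rfl⟩
    have hd1 : (4:ℤ) ∣ D - β ^ 2 := h4.dvd
    have hd2 : (4:ℤ) ∣ B₁ ^ 2 - D := ⟨A₁ * C₁, by linear_combination hdisc1⟩
    have := dvd_add hd2 hd1
    rw [show B₁ ^ 2 - D + (D - β ^ 2) = B₁ ^ 2 - β ^ 2 by ring] at this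
    have h2 : (2:ℤ) ∣ B₁ ^ 2 - β ^ 2 := dvd_trans ⟨2, by norm_num⟩ this
    have h3 := dvd_neg.mpr h2
    rwa [show -(B₁ ^ 2 - β ^ 2) = β ^ 2 - B₁ ^ 2 by ring] at h3
  have hpar : (2:ℤ) ∣ β + B₁ := by
    rcases Int.even_or_odd β with ⟨r, hr⟩ | ⟨r, hr⟩ <;>
      rcases Int.even_or_odd B₁ with ⟨s, hs⟩ | ⟨s, hs⟩
    · exact ⟨r + s, by omega⟩
    · exfalso
      have hodd : β ^ 2 - B₁ ^ 2 = 2 * (2 * r ^ 2 - 2 * s ^ 2 - 2 * s) - 1 := by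
        rw [hr, hs]; ring
      obtain ⟨w, hw⟩ := hββ; omega
    · exfalso
      have hodd : β ^ 2 - B₁ ^ 2 = 2 * (2 * r ^ 2 + 2 * r - 2 * s ^ 2) + 1 := by
        rw [hr, hs]; ring
      obtain ⟨w, hw⟩ := hββ; omega
    · exact ⟨r + s + 1, by omega⟩
  obtain ⟨k, hk⟩ := hpar
  obtain ⟨u, v, huv⟩ := id hcopA1N
  set t : ℤ := -(u * k) with htdef
  set B₂ := 2 * A₁ * t + B₁ with hB₂def
  set C₂ := A₁ * t ^ 2 + B₁ * t + C₁ with hC₂def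
  have hB₂β : B₂ + β = 2 * k * (v * N) := by
    rw [hB₂def, htdef]; linear_combination hk - 2 * k * huv
  have hdisc2 : B₂ ^ 2 - 4 * A₁ * C₂ = D := by
    rw [hB₂def, hC₂def]; linear_combination hdisc1
  have hC₂pos : 0 < C₂ := by
    by_contra hle
    push_neg at hle
    have h1 := mul_nonneg hA1pos.le (neg_nonneg.mpr hle)
    nlinarith [sq_nonneg B₂]
  have hB2val : B₂ = 2 * k * (v * N) - β := by linarith
  have hd1 : 4 * N ∣ B₂ ^ 2 - β ^ 2 := ⟨k * v * (k * v * N) - k * v * β, by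
    rw [hB2val]; ring⟩
  have hd2 : 4 * N ∣ D - β ^ 2 := hβ.dvd
  have hd3 : 4 * N ∣ B₂ ^ 2 - D := by
    have := dvd_sub hd1 hd2
    rwa [show B₂ ^ 2 - β ^ 2 - (D - β ^ 2) = B₂ ^ 2 - D by ring] at this
  have hd4 : 4 * N ∣ 4 * (A₁ * C₂) := by
    rwa [show (4:ℤ) * (A₁ * C₂) = B₂ ^ 2 - D by linarith]
  have hd5 : N ∣ A₁ * C₂ := (mul_dvd_mul_iff_left (by norm_num : (4:ℤ) ≠ 0)).mp hd4
  have hN_C₂ : N ∣ C₂ := (IsCoprime.symm hcopA1N).dvd_of_dvd_mul_left hd5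
  -- the final transformation
  refine ⟨a₁ * t + b₁, -a₁, c₁ * t + d₁, -c₁, ?_, ?_, ?_⟩
  · linear_combination hdet1
  · have hdet : (a₁ * t + b₁) * (-c₁) - (-a₁) * (c₁ * t + d₁) = 1 := by
      linear_combination hdet1
    have hAeq : A * (a₁ * t + b₁) ^ 2 + B * (a₁ * t + b₁) * (c₁ * t + d₁)
        + C * (c₁ * t + d₁) ^ 2 = C₂ := by
      rw [hC₂def, hA₁def, hB₁def, hC₁def]; ring
    have hBeq : 2 * A * (a₁ * t + b₁) * (-a₁)
        + B * ((a₁ * t + b₁) * (-c₁) + (-a₁) * (c₁ * t + d₁))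
        + 2 * C * (c₁ * t + d₁) * (-c₁) = -B₂ := by
      rw [hB₂def, hA₁def, hB₁def]; ring
    have hCeq : A * (-a₁) ^ 2 + B * (-a₁) * (-c₁) + C * (-c₁) ^ 2 = A₁ := by
      rw [hA₁def]; ring
    have hgcdfin : Int.gcd C₂ ((Int.gcd (-B₂) A₁ : ℕ) : ℤ) = 1 := by
      have h := act_gcd A B C (a₁ * t + b₁) (-a₁) (c₁ * t + d₁) (-c₁) hdet
      rw [hgcd] at h
      rw [hAeq, hBeq, hCeq] at h
      exact Nat.dvd_one.mp h
    refine ⟨?_, ?_, ?_, ?_, ?_⟩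
    · rw [hAeq]; exact hC₂pos
    · rw [hAeq, hBeq, hCeq]; exact hgcdfin
    · rw [hAeq, hBeq, hCeq]
      linear_combination hdisc2
    · rw [hAeq]; exact hN_C₂
    · rw [hAeq, hBeq, hCeq]
      by_contra hne
      obtain ⟨p, hp, hp1, hp2'⟩ := exists_prime_dvd _ _ hne
      have hpz : Prime (p : ℤ) := Nat.prime_iff_prime_int.mp hp
      have hpB₂neg : (p : ℤ) ∣ -B₂ := hp2'.trans (Int.gcd_dvd_left _ _)
      have hpB₂ : (p : ℤ) ∣ B₂ := (dvd_neg).mp hpB₂neg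
      have hpAN : (p : ℤ) ∣ A₁ * N := hp2'.trans (Int.gcd_dvd_right _ _)
      have hpC₂ : (p : ℤ) ∣ C₂ := by
        rw [← Int.ediv_mul_cancel hN_C₂]; exact hp1.mul_right N
      have hpone : ¬ ((p : ℤ) ∣ 1) := by
        intro hone
        have := Int.le_of_dvd one_pos hone
        have := hp.two_le
        omega
      rcases hpz.dvd_mul.mp hpAN with hpA₁ | hpN
      · apply hpone
        have h := Int.dvd_coe_gcd hpC₂ (Int.dvd_coe_gcd hpB₂neg hpA₁)
        rw [hgcdfin] at h
        exact_mod_cast h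
      · have hp2C₂ : (p : ℤ) * (p : ℤ) ∣ C₂ := by
          rw [← Int.ediv_mul_cancel hN_C₂]; exact mul_dvd_mul hp1 hpN
        by_cases hp2 : p = 2
        · subst hp2
          obtain ⟨b', hb'⟩ : (2:ℤ) ∣ B₂ := by exact_mod_cast hpB₂
          obtain ⟨c', hc'⟩ : (4:ℤ) ∣ C₂ := by
            have : ((2:ℕ) : ℤ) * ((2:ℕ) : ℤ) = 4 := by norm_num
            rwa [this] at hp2C₂
          have h4D : (4:ℤ) ∣ D := ⟨b' ^ 2 - 4 * A₁ * c', by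
            rw [← hdisc2, hb', hc']; ring⟩
          rcases hDfund with ⟨h1, _⟩ | ⟨h0, hsf, h23⟩
          · have : D % 4 = 0 := Int.emod_eq_zero_of_dvd h4D
            omega
          · have h1' : 4 * (D / 4) = 4 * (b' ^ 2 - 4 * (A₁ * c')) := by
              rw [Int.mul_ediv_cancel' h4D, ← hdisc2, hb', hc']; ring
            have hval : D / 4 = b' ^ 2 - 4 * (A₁ * c') :=
              mul_left_cancel₀ (by norm_num : (4:ℤ) ≠ 0) h1'
            rcases Int.even_or_odd b' with ⟨j, hj⟩ | ⟨j, hj⟩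
            · have hK : D / 4 = 4 * (j * j - A₁ * c') := by rw [hval, hj]; ring
              omega
            · have hK : D / 4 = 4 * (j * j + j - A₁ * c') + 1 := by rw [hval, hj]; ring
              omega
        · -- p odd
          have hpD : (p : ℤ) * (p : ℤ) ∣ D := by
            rw [← hdisc2]
            apply dvd_sub
            · rw [pow_two]; exact mul_dvd_mul hpB₂ hpB₂
            · exact hp2C₂.mul_left (4 * A₁)
          rcases hDfund with ⟨_, hsf⟩ | ⟨h0, hsf, _⟩
          · exact hpz.not_unit (hsf _ hpD)
          · have h4D : (4:ℤ) ∣ D := Int.dvd_of_emod_eq_zero h0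
            have hDq : D = 4 * (D / 4) := (Int.mul_ediv_cancel' h4D).symm
            have hpodd : ¬ (p : ℤ) ∣ 4 := by
              intro hd
              have hd' : p ∣ 4 := by
                have h' := Int.natCast_dvd.mp hd
                simpa using h'
              have hd'' : p ∣ 2 ^ 2 := by norm_num; omega
              have : p ∣ 2 := hp.dvd_of_dvd_pow hd''
              exact hp2 ((Nat.prime_dvd_prime_iff_eq hp Nat.prime_two).mp this)
            have hppD4 : (p : ℤ) ∣ D / 4 := by
              have hpDd : (p : ℤ) ∣ 4 * (D / 4) := by
                rw [← hDq]; exact (dvd_mul_right _ _).trans hpD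
              rcases hpz.dvd_mul.mp hpDd with hd | hd
              · exact absurd hd hpodd
              · exact hd
            obtain ⟨e, he⟩ := hppD4
            have hp4e : (p : ℤ) ∣ 4 * e := by
              have h' : (p:ℤ) * (p:ℤ) ∣ (p:ℤ) * (4 * e) := by
                rw [show (p:ℤ) * (4 * e) = 4 * ((p:ℤ) * e) by ring, ← he, ← hDq]
                exact hpD
              exact (mul_dvd_mul_iff_left
                (show (p:ℤ) ≠ 0 by exact_mod_cast hp.ne_zero)).mp h'
            rcases hpz.dvd_mul.mp hp4e with hd | hd
            · exact absurd hd hpodd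
            · have hsq : (p : ℤ) * (p : ℤ) ∣ D / 4 := by
                rw [he]; exact mul_dvd_mul_left _ hd
              exact hpz.not_unit (hsf _ hsq)
  · have hBeq : 2 * A * (a₁ * t + b₁) * (-a₁)
        + B * ((a₁ * t + b₁) * (-c₁) + (-a₁) * (c₁ * t + d₁))
        + 2 * C * (c₁ * t + d₁) * (-c₁) = -B₂ := by
      rw [hB₂def, hA₁def, hB₁def]; ring
    rw [hBeq, Int.modEq_iff_dvd]
    exact ⟨k * v, by linear_combination hB₂β⟩
end

section
/- Let N be a positive integer, D a negative fundamental discriminant, and β an integer with β² ≡ D (mod 4N). Let (A,B,C) and (A',B',C') be Heegner forms of level N and discriminant D with B ≡ β (mod 2N) and B' ≡ β (mod 2N). If there exists γ ∈ SL₂(ℤ) with (A,B,C)·γ = (A',B',C'), then there exists δ ∈ Γ₀(N) with (A,B,C)·δ = (A',B',C'). In other words, SL₂(ℤ)-equivalent Heegner forms with the same square root β of D modulo 2N are already Γ₀(N)-equivalent. -/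
/-!
Let `γ = [[a, b], [c, d]] ∈ SL₂(ℤ)` carry `(A, B, C)` to `(A', B', C')`. Then `γ` itself lies
in `Γ₀(N)`. Reducing the transformation formulas with `ad - bc = 1` gives
`A' - A a² = a (cB) + c (cC)` and `B' - B = 2 (A a b + b (cB) + d (cC))`. As `N` divides `A` and
`A'` and `2N` divides `B' - B`, `N` divides both combinations of `(cB, cC)`, and since they come
from a unimodular matrix, `N` divides `cB` and `cC`. It also divides `cA`, so primitivity of
`(A, B, C)` forces `N ∣ c`.
-/

theorem dvd_and_dvd_of_det_eq_one {R : Type*} [CommRing R] {n a b c d x y : R}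
    (hdet : a * d - b * c = 1) (h₁ : n ∣ a * x + c * y) (h₂ : n ∣ b * x + d * y) :
    n ∣ x ∧ n ∣ y := by
  constructor
  · calc n ∣ d * (a * x + c * y) - c * (b * x + d * y) := dvd_sub (h₁.mul_left d) (h₂.mul_left c)
      _ = x := by linear_combination x * hdet
  · calc n ∣ a * (b * x + d * y) - b * (a * x + c * y) := dvd_sub (h₂.mul_left a) (h₁.mul_left b)
      _ = y := by linear_combination y * hdet

theorem IsCoprime.dvd_of_dvd_mul_of_dvd_mul {R : Type*} [CommRing R] {n c x y : R}
    (hxy : IsCoprime x y) (hx : n ∣ c * x) (hy : n ∣ c * y) : n ∣ c := by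
  obtain ⟨u, v, huv⟩ := hxy
  calc n ∣ u * (c * x) + v * (c * y) := dvd_add (hx.mul_left u) (hy.mul_left v)
    _ = c := by linear_combination c * huv

theorem Int.dvd_of_dvd_mul_of_gcd_gcd_eq_one {n c A B C : ℤ}
    (hprim : Int.gcd A (Int.gcd B C : ℤ) = 1)
    (hA : n ∣ c * A) (hB : n ∣ c * B) (hC : n ∣ c * C) : n ∣ c := by
  have hBC : n ∣ c * (Int.gcd B C : ℤ) := by
    rw [Int.gcd_eq_gcd_ab, mul_add, ← mul_assoc, ← mul_assoc]
    exact dvd_add (hB.mul_right _) (hC.mul_right _)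
  exact (Int.isCoprime_iff_gcd_eq_one.mpr hprim).dvd_of_dvd_mul_of_dvd_mul hA hBC

theorem sl2_equivalent_heegner_forms_gamma0_equivalent_general
    (N D β : ℤ)
    (A B C A' B' C' : ℤ)
    (h : IsHeegnerForm N D A B C) (h' : IsHeegnerForm N D A' B' C')
    (hB : B ≡ β [ZMOD 2 * N]) (hB' : B' ≡ β [ZMOD 2 * N])
    (hequiv : ∃ a b c d : ℤ, a * d - b * c = 1 ∧
      (A * a ^ 2 + B * a * c + C * c ^ 2,
       2 * A * a * b + B * (a * d + b * c) + 2 * C * c * d,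
       A * b ^ 2 + B * b * d + C * d ^ 2) = (A', B', C')) :
    ∃ a b c d : ℤ, a * d - b * c = 1 ∧ N ∣ c ∧
      (A * a ^ 2 + B * a * c + C * c ^ 2,
       2 * A * a * b + B * (a * d + b * c) + 2 * C * c * d,
       A * b ^ 2 + B * b * d + C * d ^ 2) = (A', B', C') := by
  obtain ⟨a, b, c, d, hdet, heq⟩ := hequiv
  refine ⟨a, b, c, d, hdet, ?_, heq⟩
  rw [Prod.mk.injEq, Prod.mk.injEq] at heq
  obtain ⟨eA', eB', -⟩ := heq
  obtain ⟨-, hprim, -, hNA, -⟩ := h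
  obtain ⟨-, -, -, hNA', -⟩ := h'
  have hfirst : N ∣ a * (c * B) + c * (c * C) := by
    calc N ∣ A' - A * a ^ 2 := dvd_sub hNA' (hNA.mul_right _)
      _ = a * (c * B) + c * (c * C) := by rw [← eA']; ring
  have hsecond : N ∣ b * (c * B) + d * (c * C) := by
    have h2N : 2 * N ∣ 2 * (A * a * b + (b * (c * B) + d * (c * C))) := by
      calc 2 * N ∣ B' - B := (hB.trans hB'.symm).dvd
        _ = _ := by rw [← eB']; linear_combination B * hdet
    exact (dvd_add_right ((hNA.mul_right a).mul_right b)).mp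
      ((mul_dvd_mul_iff_left two_ne_zero).mp h2N)
  obtain ⟨hcB, hcC⟩ := dvd_and_dvd_of_det_eq_one hdet hfirst hsecond
  exact Int.dvd_of_dvd_mul_of_gcd_gcd_eq_one hprim (hNA.mul_left c) hcB hcC

/-- `SL₂(ℤ)`-equivalent Heegner forms of level `N` and fundamental discriminant
`D` sharing the same square root `β` of `D` modulo `2N` are already
`Γ₀(N)`-equivalent. -/
theorem sl2_equivalent_heegner_forms_gamma0_equivalent
    (N D β : ℤ) (hN : 0 < N)
    (hfund : IsFundamentalDiscriminant D)
    (hβ : β ^ 2 ≡ D [ZMOD 4 * N])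
    (A B C A' B' C' : ℤ)
    (h : IsHeegnerForm N D A B C) (h' : IsHeegnerForm N D A' B' C')
    (hB : B ≡ β [ZMOD 2 * N]) (hB' : B' ≡ β [ZMOD 2 * N])
    (hequiv : ∃ a b c d : ℤ, a * d - b * c = 1 ∧
      (A * a ^ 2 + B * a * c + C * c ^ 2,
       2 * A * a * b + B * (a * d + b * c) + 2 * C * c * d,
       A * b ^ 2 + B * b * d + C * d ^ 2) = (A', B', C')) :
    ∃ a b c d : ℤ, a * d - b * c = 1 ∧ N ∣ c ∧
      (A * a ^ 2 + B * a * c + C * c ^ 2,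
       2 * A * a * b + B * (a * d + b * c) + 2 * C * c * d,
       A * b ^ 2 + B * b * d + C * d ^ 2) = (A', B', C') :=
  sl2_equivalent_heegner_forms_gamma0_equivalent_general N D β A B C A' B' C' h h' hB hB' hequiv
end

section
/- Let N be a positive integer and D a negative fundamental discriminant. Then the map sending a Heegner form (A,B,C) of level N and discriminant D to the pair (B mod 2N, its SL₂(ℤ)-equivalence class) induces a bijection between the set of Γ₀(N)-orbits of Heegner forms of level N and discriminant D and the product of the set {β ∈ ℤ/2Nℤ : β² ≡ D (mod 4N)} with the set of SL₂(ℤ)-equivalence classes of primitive positive-definite integral binary quadratic forms of discriminant D. -/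
/-- The right action of an integer matrix `[[a,b],[c,d]]` on an integral binary
quadratic form `(A,B,C)`. -/
def formAct (f : ℤ × ℤ × ℤ) (a b c d : ℤ) : ℤ × ℤ × ℤ :=
  (f.1 * a ^ 2 + f.2.1 * a * c + f.2.2 * c ^ 2,
   2 * f.1 * a * b + f.2.1 * (a * d + b * c) + 2 * f.2.2 * c * d,
   f.1 * b ^ 2 + f.2.1 * b * d + f.2.2 * d ^ 2)

/-- `SL₂(ℤ)`-equivalence of integral binary quadratic forms. -/
def SL2Equiv (f g : ℤ × ℤ × ℤ) : Prop :=
  ∃ a b c d : ℤ, a * d - b * c = 1 ∧ formAct f a b c d = g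

/-- `Γ₀(N)`-equivalence of integral binary quadratic forms. -/
def Gamma0Equiv (N : ℤ) (f g : ℤ × ℤ × ℤ) : Prop :=
  ∃ a b c d : ℤ, a * d - b * c = 1 ∧ N ∣ c ∧ formAct f a b c d = g

/-- A Heegner form of level `N` and discriminant `D`. -/
def IsHeegnerTriple (N D : ℤ) (f : ℤ × ℤ × ℤ) : Prop :=
  0 < f.1 ∧ Int.gcd f.1 (Int.gcd f.2.1 f.2.2 : ℤ) = 1 ∧
    f.2.1 ^ 2 - 4 * f.1 * f.2.2 = D ∧ N ∣ f.1 ∧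
    Int.gcd (f.1 / N) (Int.gcd f.2.1 (f.2.2 * N) : ℤ) = 1

/-- A primitive positive-definite integral binary quadratic form of
discriminant `D` (with `D < 0`). -/
def IsPrimPosDef (D : ℤ) (f : ℤ × ℤ × ℤ) : Prop :=
  0 < f.1 ∧ Int.gcd f.1 (Int.gcd f.2.1 f.2.2 : ℤ) = 1 ∧
    f.2.1 ^ 2 - 4 * f.1 * f.2.2 = D

lemma formAct_comp (f : ℤ × ℤ × ℤ) (a b c d a' b' c' d' : ℤ) :
    formAct (formAct f a b c d) a' b' c' d' =
      formAct f (a*a'+b*c') (a*b'+b*d') (c*a'+d*c') (c*b'+d*d') := by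
  simp only [formAct, Prod.mk.injEq]
  refine ⟨by ring, by ring, by ring⟩

lemma formAct_id (f : ℤ × ℤ × ℤ) : formAct f 1 0 0 1 = f := by
  simp only [formAct]; refine Prod.ext (by ring) (Prod.ext (by ring) (by ring))

lemma disc_formAct (f : ℤ × ℤ × ℤ) (a b c d : ℤ) (h : a * d - b * c = 1) :
    (formAct f a b c d).2.1 ^ 2 - 4 * (formAct f a b c d).1 * (formAct f a b c d).2.2
      = f.2.1 ^ 2 - 4 * f.1 * f.2.2 := by
  simp only [formAct]
  linear_combination ((f.2.1 ^ 2 - 4 * f.1 * f.2.2) * (a * d - b * c + 1)) * h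

lemma formAct_inv (f g : ℤ × ℤ × ℤ) (a b c d : ℤ) (h : a * d - b * c = 1)
    (hfg : formAct f a b c d = g) : formAct g d (-b) (-c) a = f := by
  rw [← hfg, formAct_comp]
  have h1 : a*d + b*(-c) = 1 := by linarith
  have h2 : a*(-b) + b*a = 0 := by ring
  have h3 : c*d + d*(-c) = 0 := by ring
  have h4 : c*(-b) + d*a = 1 := by linarith
  rw [h1, h2, h3, h4, formAct_id]

lemma sl2equiv_equivalence : Equivalence SL2Equiv := by
  constructor
  · intro f; exact ⟨1, 0, 0, 1, by ring, formAct_id f⟩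
  · rintro f g ⟨a, b, c, d, h, hfg⟩
    exact ⟨d, -b, -c, a, by linarith, formAct_inv f g a b c d h hfg⟩
  · rintro f g k ⟨a, b, c, d, h, hfg⟩ ⟨a', b', c', d', h', hgk⟩
    refine ⟨a*a'+b*c', a*b'+b*d', c*a'+d*c', c*b'+d*d', ?_, by
      rw [← formAct_comp, hfg, hgk]⟩
    linear_combination (a'*d'-b'*c')*h + h'

-- primitivity: common divisor of image coeffs divides original coeffs
lemma prim_formAct {D : ℤ} {f : ℤ × ℤ × ℤ} (hf : IsPrimPosDef D f)
    (a b c d : ℤ) (h : a * d - b * c = 1) :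
    Int.gcd (formAct f a b c d).1 (Int.gcd (formAct f a b c d).2.1 (formAct f a b c d).2.2 : ℤ) = 1 := by
  set g := formAct f a b c d with hg
  have hback : formAct g d (-b) (-c) a = f := formAct_inv f g a b c d h rfl
  set e : ℤ := (Int.gcd g.1 (Int.gcd g.2.1 g.2.2 : ℤ) : ℤ) with he
  have h1 : e ∣ g.1 := (Int.gcd_dvd_left _ _)
  have hmid : e ∣ (Int.gcd g.2.1 g.2.2 : ℤ) := (Int.gcd_dvd_right _ _)
  have h2 : e ∣ g.2.1 := hmid.trans (Int.gcd_dvd_left _ _)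
  have h3 : e ∣ g.2.2 := hmid.trans (Int.gcd_dvd_right _ _)
  -- e divides f's coefficients
  have hA : e ∣ f.1 := by
    have : f.1 = g.1 * d^2 + g.2.1 * d * (-c) + g.2.2 * (-c)^2 := by
      rw [← hback]; rfl
    rw [this]
    exact dvd_add (dvd_add (h1.mul_right _) ((h2.mul_right _).mul_right _)) (h3.mul_right _)
  have hB : e ∣ f.2.1 := by
    have : f.2.1 = 2 * g.1 * d * (-b) + g.2.1 * (d * a + (-b) * (-c)) + 2 * g.2.2 * (-c) * a := by
      rw [← hback]; rfl
    rw [this]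
    refine dvd_add (dvd_add ?_ (h2.mul_right _)) ?_
    · have : 2 * g.1 * d * (-b) = g.1 * (2 * d * (-b)) := by ring
      rw [this]; exact h1.mul_right _
    · have : 2 * g.2.2 * (-c) * a = g.2.2 * (2 * (-c) * a) := by ring
      rw [this]; exact h3.mul_right _
  have hC : e ∣ f.2.2 := by
    have : f.2.2 = g.1 * (-b)^2 + g.2.1 * (-b) * a + g.2.2 * a^2 := by
      rw [← hback]; rfl
    rw [this]
    exact dvd_add (dvd_add (h1.mul_right _) ((h2.mul_right _).mul_right _)) (h3.mul_right _)
  have : e ∣ (1 : ℤ) := by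
    have := Int.dvd_coe_gcd hA (Int.dvd_coe_gcd hB hC)
    rwa [hf.2.1, Nat.cast_one] at this
  have h1e := Int.eq_one_of_dvd_one (by positivity) this
  rw [he] at h1e
  exact_mod_cast h1e

lemma lead_pos_formAct {D : ℤ} {f : ℤ × ℤ × ℤ} (hf : IsPrimPosDef D f) (hD : D < 0)
    (a b c d : ℤ) (h : a * d - b * c = 1) : 0 < (formAct f a b c d).1 := by
  obtain ⟨hA, hprim, hdisc⟩ := hf
  have key : 4 * f.1 * (formAct f a b c d).1 = (2 * f.1 * a + f.2.1 * c)^2 - D * c^2 := by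
    simp only [formAct]; linear_combination (-(c^2)) * hdisc
  rcases lt_trichotomy (formAct f a b c d).1 0 with hlt | heq | hgt
  · nlinarith [sq_nonneg (2 * f.1 * a + f.2.1 * c), sq_nonneg c]
  · exfalso
    have hc : c = 0 := by nlinarith [sq_nonneg (2 * f.1 * a + f.2.1 * c), sq_nonneg c]
    subst hc
    rw [heq] at key
    have h2 : (2 * f.1 * a + f.2.1 * 0)^2 = 0 := by nlinarith
    have h3 : 2 * f.1 * a + f.2.1 * 0 = 0 := by
      exact pow_eq_zero_iff (n := 2) (by norm_num) |>.mp h2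
    have h4 : (2 * f.1) * a = 0 := by linarith
    rcases mul_eq_zero.mp h4 with h5 | h5
    · linarith
    · rw [h5] at h; simp at h
  · exact hgt

lemma primPosDef_formAct {D : ℤ} {f : ℤ × ℤ × ℤ} (hf : IsPrimPosDef D f) (hD : D < 0)
    (a b c d : ℤ) (h : a * d - b * c = 1) : IsPrimPosDef D (formAct f a b c d) :=
  ⟨lead_pos_formAct hf hD a b c d h, prim_formAct hf a b c d h,
    by rw [disc_formAct f a b c d h]; exact hf.2.2⟩

lemma heegner_of_primPosDef {N D : ℤ} (hN : 0 < N) (hfund : IsFundamentalDiscriminant D)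
    {f : ℤ × ℤ × ℤ} (hf : IsPrimPosDef D f) (hdvd : N ∣ f.1) : IsHeegnerTriple N D f := by
  obtain ⟨hA, hprim, hdisc⟩ := hf
  refine ⟨hA, hprim, hdisc, hdvd, ?_⟩
  set A := f.1 with hAdef
  set B := f.2.1 with hBdef
  set C := f.2.2 with hCdef
  have hAeq : A = N * (A / N) := (Int.mul_ediv_cancel' hdvd).symm
  have hQpos : 0 < A / N := by
    rcases lt_trichotomy (A / N) 0 with h | h | h
    · nlinarith
    · rw [h] at hAeq; simp at hAeq; omega
    · exact h
  by_contra hne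
  obtain ⟨p, hp, hpe⟩ := Nat.exists_prime_and_dvd hne
  have hpz : (p : ℤ) ∣ (Int.gcd (A / N) (Int.gcd B (C * N) : ℤ) : ℤ) := Int.natCast_dvd_natCast.mpr hpe
  have hpQ : (p : ℤ) ∣ A / N := hpz.trans (Int.gcd_dvd_left _ _)
  have hpB : (p : ℤ) ∣ B := (hpz.trans (Int.gcd_dvd_right _ _)).trans (Int.gcd_dvd_left _ _)
  have hpCN : (p : ℤ) ∣ C * N := (hpz.trans (Int.gcd_dvd_right _ _)).trans (Int.gcd_dvd_right _ _)
  have hpA : (p : ℤ) ∣ A := hAeq ▸ (hpQ.mul_left N)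
  have hpprime : Prime (p : ℤ) := Nat.prime_iff_prime_int.mp hp
  by_cases hpC : (p : ℤ) ∣ C
  · -- contradicts primitivity
    have : (p : ℤ) ∣ (1 : ℤ) := by
      have := Int.dvd_coe_gcd hpA (Int.dvd_coe_gcd hpB hpC)
      rwa [hprim, Nat.cast_one] at this
    have := Int.eq_one_of_dvd_one (by positivity) this
    have : p = 1 := by exact_mod_cast this
    exact hp.one_lt.ne' this
  · have hpN : (p : ℤ) ∣ N := (hpprime.dvd_mul.mp hpCN).resolve_left hpC
    have hppA : (p : ℤ) * p ∣ A := hAeq ▸ mul_dvd_mul hpN hpQ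
    have hppD : (p : ℤ) * p ∣ D := by
      have h1 : (p : ℤ) * p ∣ B ^ 2 := by
        obtain ⟨b', hb'⟩ := hpB
        exact ⟨b' * b', by rw [hb']; ring⟩
      have h2 : (p : ℤ) * p ∣ 4 * A * C := by
        obtain ⟨a', ha'⟩ := hppA
        exact ⟨4 * a' * C, by rw [ha']; ring⟩
      exact hdisc ▸ dvd_sub h1 h2
    have hnotunit : ¬ IsUnit ((p : ℤ)) := hpprime.not_unit
    rcases eq_or_ne p 2 with h2 | hodd
    · -- p = 2
      subst h2
      obtain ⟨B', hB'⟩ := hpB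
      obtain ⟨A', hA'⟩ := hppA
      rcases hfund.2 with ⟨h1, _⟩ | ⟨h0, hsq, hm24⟩
      · have : (2 : ℤ) ∣ D := by
          refine hdisc ▸ ⟨2 * B' ^ 2 - 2 * A * C, ?_⟩
          rw [hB']; push_cast; ring
        omega
      · obtain ⟨m, hm4⟩ : (4 : ℤ) ∣ D := Int.dvd_of_emod_eq_zero h0
        have hmd : D / 4 = m := by rw [hm4]; exact Int.mul_ediv_cancel_left m (by norm_num)
        rw [hmd] at hm24
        have hAC : A = 4 * A' := by rw [hA']; push_cast; ring
        have hmval : m = B' ^ 2 - 4 * A' * C := by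
          have : (4:ℤ) * m = 4 * (B' ^ 2 - 4 * A' * C) := by
            rw [← hm4, ← hdisc, hB', hAC]; push_cast; ring
          linarith
        rcases Int.even_or_odd B' with ⟨u, hu⟩ | ⟨u, hu⟩
        · have : m = 4 * (u ^ 2 - A' * C) := by rw [hmval, hu]; ring
          omega
        · have : m = 4 * (u ^ 2 + u - A' * C) + 1 := by rw [hmval, hu]; ring
          omega
    · -- p odd
      have hp2 : ¬ (p : ℤ) ∣ 2 := by
        intro h
        have h2' : p ∣ 2 := Int.natCast_dvd_natCast.mp (by exact_mod_cast h)
        have := (Nat.prime_dvd_prime_iff_eq hp Nat.prime_two).mp h2'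
        exact hodd this
      rcases hfund.2 with ⟨h1, hsq⟩ | ⟨h0, hsq, hm24⟩
      · exact hnotunit (hsq _ hppD)
      · obtain ⟨m, hm4⟩ : (4 : ℤ) ∣ D := Int.dvd_of_emod_eq_zero h0
        have hmd : D / 4 = m := by rw [hm4]; exact Int.mul_ediv_cancel_left m (by norm_num)
        have hp4 : ¬ (p : ℤ) ∣ 4 := by
          intro h
          have h' : (p : ℤ) ∣ 2 ^ 2 := by norm_num at h ⊢; exact h
          exact hp2 (hpprime.dvd_of_dvd_pow h')
        have hppm : (p : ℤ) * p ∣ m := by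
          have h4m : (p : ℤ) * p ∣ 4 * m := hm4 ▸ hppD
          have : (p:ℤ) ^ 2 ∣ 4 * m := by rwa [pow_two]
          have := (hpprime.pow_dvd_of_dvd_mul_left 2 hp4) this
          rwa [pow_two] at this
        exact hnotunit (hsq _ (hmd ▸ hppm))

lemma B_congr_gamma0 {N : ℤ} {f : ℤ × ℤ × ℤ} (hA : N ∣ f.1) (a b c d : ℤ)
    (h : a * d - b * c = 1) (hc : N ∣ c) :
    2 * N ∣ (formAct f a b c d).2.1 - f.2.1 := by
  obtain ⟨A0, hA0⟩ := hA
  obtain ⟨c0, hc0⟩ := hc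
  subst hc0
  refine ⟨a * b * A0 + f.2.1 * b * c0 + f.2.2 * c0 * d, ?_⟩
  simp only [formAct]
  rw [hA0]
  linear_combination f.2.1 * h

lemma dvd_c_of_heegner {N : ℤ} {f : ℤ × ℤ × ℤ}
    (hA : N ∣ f.1) (hprim : Int.gcd f.1 (Int.gcd f.2.1 f.2.2 : ℤ) = 1)
    (a b c d : ℤ) (h : a * d - b * c = 1)
    (hA' : N ∣ (formAct f a b c d).1)
    (hB' : 2 * N ∣ (formAct f a b c d).2.1 - f.2.1) : N ∣ c := by
  set A := f.1; set B := f.2.1; set C := f.2.2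
  have hX : N ∣ c * (B * a + C * c) := by
    have e1 : c * (B * a + C * c) = (formAct f a b c d).1 - A * a ^ 2 := by
      simp only [formAct]; ring
    rw [e1]; exact dvd_sub hA' (Dvd.dvd.mul_right hA _)
  have hY : N ∣ c * (B * b + C * d) := by
    obtain ⟨k, hk⟩ := hB'
    have e2 : c * (B * b + C * d) = N * k - A * (a * b) := by
      have : (formAct f a b c d).2.1 - B = 2 * (A * a * b + c * (B * b + C * d)) := by
        simp only [formAct]; linear_combination f.2.1 * h
      rw [this] at hk
      linarith
    rw [e2]; exact dvd_sub ⟨k, rfl⟩ (Dvd.dvd.mul_right hA _)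
  have hcB : N ∣ c * B := by
    have e3 : c * B = d * (c * (B * a + C * c)) - c * (c * (B * b + C * d)) := by
      linear_combination (-(c*B)) * h
    rw [e3]; exact dvd_sub (hX.mul_left d) (hY.mul_left c)
  have hcC : N ∣ c * C := by
    have e4 : c * C = a * (c * (B * b + C * d)) - b * (c * (B * a + C * c)) := by
      linear_combination (-(c*C)) * h
    rw [e4]; exact dvd_sub (hY.mul_left a) (hX.mul_left b)
  have hcA : N ∣ c * A := (hA.mul_left c)
  obtain ⟨u, v, huv⟩ := Int.isCoprime_iff_gcd_eq_one.mpr hprim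
  have hg : (Int.gcd B C : ℤ) = B * Int.gcdA B C + C * Int.gcdB B C := Int.gcd_eq_gcd_ab B C
  set x := Int.gcdA B C; set y := Int.gcdB B C
  obtain ⟨kA, ekA⟩ := hcA
  obtain ⟨kB, ekB⟩ := hcB
  obtain ⟨kC, ekC⟩ := hcC
  exact ⟨u * kA + v * x * kB + v * y * kC,
    by linear_combination (-c) * huv + u * ekA + c * v * hg + v * x * ekB + v * y * ekC⟩

lemma not_dvd_all {A B C : ℤ} (hprim : Int.gcd A (Int.gcd B C : ℤ) = 1) {p : ℕ}
    (hp : p.Prime) (h1 : (p:ℤ) ∣ A) (h2 : (p:ℤ) ∣ B) (h3 : (p:ℤ) ∣ C) : False := by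
  have : (p : ℤ) ∣ (1 : ℤ) := by
    have := Int.dvd_coe_gcd h1 (Int.dvd_coe_gcd h2 h3)
    rwa [hprim, Nat.cast_one] at this
  have := Int.eq_one_of_dvd_one (by positivity) this
  have : p = 1 := by exact_mod_cast this
  exact hp.one_lt.ne' this

lemma rep_coprime (M : ℕ) (hM : 0 < M) (A B C : ℤ)
    (hprim : Int.gcd A (Int.gcd B C : ℤ) = 1) :
    ∃ x y : ℤ, Int.gcd (A * x ^ 2 + B * x * y + C * y ^ 2) M = 1 := by
  induction M using Nat.strong_induction_on with
  | _ M IH =>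
  rcases eq_or_ne M 1 with rfl | hM1
  · exact ⟨1, 0, by simp [Int.gcd]⟩
  have hM0 : M ≠ 0 := hM.ne'
  set p := M.minFac with hpdef
  have hp : p.Prime := Nat.minFac_prime hM1
  have hpM : p ∣ M := Nat.minFac_dvd M
  set k := M.factorization p with hkdef
  set M' := ordCompl[p] M with hM'def
  have hM'pos : 0 < M' := Nat.ordCompl_pos p hM0
  have hpM' : ¬ p ∣ M' := Nat.not_dvd_ordCompl hp hM0
  have hMeq : p ^ k * M' = M := Nat.ordProj_mul_ordCompl_eq_self M p
  have hlt : M' < M := by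
    have hk : 0 < k := hp.factorization_pos_of_dvd hM0 hpM
    have h2 : 2 ≤ p ^ k := le_trans hp.two_le (Nat.le_self_pow hk.ne' p)
    calc M' < 2 * M' := by omega
    _ ≤ p ^ k * M' := Nat.mul_le_mul_right M' h2
    _ = M := hMeq
  obtain ⟨x', y', hF'⟩ := IH M' hlt hM'pos
  -- choose residues mod p
  obtain ⟨x0, y0, hvp⟩ : ∃ x0 y0 : ℤ, ¬ (p:ℤ) ∣ (A * x0 ^ 2 + B * x0 * y0 + C * y0 ^ 2) := by
    by_cases hA : (p:ℤ) ∣ A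
    · by_cases hC : (p:ℤ) ∣ C
      · refine ⟨1, 1, fun h => ?_⟩
        have h' : (p:ℤ) ∣ A + B + C := by simpa using h
        have hB : (p:ℤ) ∣ B := by
          have h2 := dvd_sub (dvd_sub h' hA) hC
          have e : A + B + C - A - C = B := by ring
          rwa [e] at h2
        exact not_dvd_all hprim hp hA hB hC
      · exact ⟨0, 1, fun h => hC (by simpa using h)⟩
    · exact ⟨1, 0, fun h => hA (by simpa using h)⟩
  -- CRT
  have hcop : Nat.Coprime p M' := (Nat.Prime.coprime_iff_not_dvd hp).mpr hpM'
  obtain ⟨u, v, huv⟩ : IsCoprime (p : ℤ) (M' : ℤ) := by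
    rw [Int.isCoprime_iff_gcd_eq_one]
    exact_mod_cast hcop
  set x : ℤ := x0 * (v * M') + x' * (u * p) with hxdef
  set y : ℤ := y0 * (v * M') + y' * (u * p) with hydef
  obtain ⟨s, hs⟩ : (p:ℤ) ∣ x - x0 := ⟨u * (x' - x0), by linear_combination x0 * huv⟩
  obtain ⟨t, ht⟩ : (p:ℤ) ∣ y - y0 := ⟨u * (y' - y0), by linear_combination y0 * huv⟩
  obtain ⟨s', hs'⟩ : (M':ℤ) ∣ x - x' := ⟨v * (x0 - x'), by linear_combination x' * huv⟩
  obtain ⟨t', ht'⟩ : (M':ℤ) ∣ y - y' := ⟨v * (y0 - y'), by linear_combination y' * huv⟩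
  set F := A * x ^ 2 + B * x * y + C * y ^ 2 with hFdef
  have hpF : (p:ℤ) ∣ F - (A * x0 ^ 2 + B * x0 * y0 + C * y0 ^ 2) :=
    ⟨A * (x + x0) * s + B * (x * t + y0 * s) + C * (y + y0) * t,
      by linear_combination (A * (x + x0) + B * y0) * hs + (B * x + C * (y + y0)) * ht⟩
  have hM'F : (M':ℤ) ∣ F - (A * x' ^ 2 + B * x' * y' + C * y' ^ 2) :=
    ⟨A * (x + x') * s' + B * (x * t' + y' * s') + C * (y + y') * t',
      by linear_combination (A * (x + x') + B * y') * hs' + (B * x + C * (y + y')) * ht'⟩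
  refine ⟨x, y, ?_⟩
  show Nat.gcd F.natAbs ((M : ℤ)).natAbs = 1
  rw [Int.natAbs_natCast]
  by_contra hne
  obtain ⟨q, hq, hqF, hqM⟩ := Nat.Prime.not_coprime_iff_dvd.mp hne
  have hqFz : (q:ℤ) ∣ F := (Int.natCast_dvd_natCast.mpr hqF).trans (Int.natAbs_dvd.mpr dvd_rfl)
  have hqM2 : q ∣ p ^ k * M' := by rw [hMeq]; exact hqM
  rcases (Nat.Prime.dvd_mul hq).mp hqM2 with hq1 | hq2
  · have hqp : q = p := (Nat.prime_dvd_prime_iff_eq hq hp).mp (hq.dvd_of_dvd_pow hq1)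
    subst hqp
    have hd := dvd_sub hqFz hpF
    have e : F - (F - (A * x0 ^ 2 + B * x0 * y0 + C * y0 ^ 2))
        = A * x0 ^ 2 + B * x0 * y0 + C * y0 ^ 2 := by ring
    rw [e] at hd
    exact hvp hd
  · have hqF' : (q:ℤ) ∣ A * x' ^ 2 + B * x' * y' + C * y' ^ 2 := by
      have h1 : (q:ℤ) ∣ F - (A * x' ^ 2 + B * x' * y' + C * y' ^ 2) :=
        ((Int.natCast_dvd_natCast.mpr hq2).trans hM'F)
      have hd := dvd_sub hqFz h1
      have e : F - (F - (A * x' ^ 2 + B * x' * y' + C * y' ^ 2))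
          = A * x' ^ 2 + B * x' * y' + C * y' ^ 2 := by ring
      rwa [e] at hd
    have hq1' : q ∣ 1 := by
      rw [← hF']
      have hn1 : q ∣ (A * x' ^ 2 + B * x' * y' + C * y' ^ 2).natAbs := by
        have := Int.natAbs_dvd_natAbs.mpr hqF'
        simpa using this
      show q ∣ Nat.gcd (A * x' ^ 2 + B * x' * y' + C * y' ^ 2).natAbs ((M' : ℤ)).natAbs
      rw [Int.natAbs_natCast]
      exact Nat.dvd_gcd hn1 hq2
    have hq1 : q = 1 := Nat.dvd_one.mp hq1'
    exact hq.one_lt.ne' hq1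

lemma rep_coprime' (M : ℕ) (hM : 0 < M) (A B C : ℤ)
    (hprim : Int.gcd A (Int.gcd B C : ℤ) = 1) :
    ∃ x y : ℤ, IsCoprime x y ∧ Int.gcd (A * x ^ 2 + B * x * y + C * y ^ 2) M = 1 := by
  obtain ⟨x, y, h⟩ := rep_coprime M hM A B C hprim
  by_cases hxy : x = 0 ∧ y = 0
  · rw [hxy.1, hxy.2] at h
    simp only [mul_zero, zero_pow, mul_one, add_zero, zero_add, ne_eq, OfNat.ofNat_ne_zero,
      not_false_eq_true] at h
    have hM1 : M = 1 := by
      have h2 : Int.gcd 0 (M : ℤ) = M := by simp [Int.gcd]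
      omega
    subst hM1
    exact ⟨1, 0, isCoprime_one_left, by simp [Int.gcd]⟩
  · have hd : Int.gcd x y ≠ 0 := fun h0 => hxy ⟨(Int.gcd_eq_zero_iff.mp h0).1, (Int.gcd_eq_zero_iff.mp h0).2⟩
    set d : ℤ := (Int.gcd x y : ℤ) with hddef
    have hdx : d ∣ x := (Int.gcd_dvd_left _ _)
    have hdy : d ∣ y := (Int.gcd_dvd_right _ _)
    set x0 := x / d with hx0
    set y0 := y / d with hy0
    have hx : x = d * x0 := (Int.mul_ediv_cancel' hdx).symm
    have hy : y = d * y0 := (Int.mul_ediv_cancel' hdy).symm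
    have hdpos : 0 < Int.gcd x y := Nat.pos_of_ne_zero hd
    have hcop : IsCoprime x0 y0 := by
      rw [Int.isCoprime_iff_gcd_eq_one]
      exact Int.gcd_div_gcd_div_gcd hdpos
    refine ⟨x0, y0, hcop, ?_⟩
    have hdvd : A * x0 ^ 2 + B * x0 * y0 + C * y0 ^ 2 ∣ A * x ^ 2 + B * x * y + C * y ^ 2 :=
      ⟨d ^ 2, by rw [hx, hy]; ring⟩
    set k := Int.gcd (A * x0 ^ 2 + B * x0 * y0 + C * y0 ^ 2) M with hkdef
    have h1 : (k : ℤ) ∣ ↑(Int.gcd (A * x ^ 2 + B * x * y + C * y ^ 2) M) :=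
      Int.dvd_coe_gcd ((Int.gcd_dvd_left _ _).trans hdvd) (Int.gcd_dvd_right _ _)
    rw [h] at h1
    have : k ∣ 1 := by exact_mod_cast h1
    exact Nat.dvd_one.mp this

lemma exists_heegner_rep {N D : ℤ} (hN : 0 < N) (hfund : IsFundamentalDiscriminant D)
    {g : ℤ × ℤ × ℤ} (hg : IsPrimPosDef D g) {b : ℤ} (hb : b ^ 2 ≡ D [ZMOD 4 * N]) :
    ∃ h : ℤ × ℤ × ℤ, IsHeegnerTriple N D h ∧ SL2Equiv g h ∧ 2 * N ∣ h.2.1 - b := by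
  have hD : D < 0 := hfund.1
  have hMpos : 0 < N.toNat := by omega
  obtain ⟨x, y, hxyc, hgcd⟩ := rep_coprime' N.toNat hMpos g.1 g.2.1 g.2.2 hg.2.1
  obtain ⟨u, v, huv⟩ := hxyc
  have hdet1 : x * u - (-v) * y = 1 := by linear_combination huv
  set g1 := formAct g x (-v) y u with hg1def
  have hg1 : IsPrimPosDef D g1 := primPosDef_formAct hg hD _ _ _ _ hdet1
  have hA1 : g1.1 = g.1 * x ^ 2 + g.2.1 * x * y + g.2.2 * y ^ 2 := rfl
  have hcopA : IsCoprime g1.1 N := by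
    rw [Int.isCoprime_iff_gcd_eq_one]
    have : (N.toNat : ℤ) = N := Int.toNat_of_nonneg hN.le
    rw [hA1, ← this]
    exact hgcd
  set A1 := g1.1 with hA1def
  set B1 := g1.2.1 with hB1def
  -- parity : 2 ∣ b + B1
  have h4 : (4 : ℤ) ∣ b ^ 2 - B1 ^ 2 := by
    have h1 : 4 * N ∣ D - b ^ 2 := Int.ModEq.dvd hb
    obtain ⟨z, hz⟩ := h1
    have hdisc1 : B1 ^ 2 - 4 * A1 * g1.2.2 = D := hg1.2.2
    exact ⟨-(N * z) - A1 * g1.2.2, by linear_combination -hz - hdisc1⟩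
  have hpar : (2 : ℤ) ∣ b + B1 := by
    rcases Int.even_or_odd (b + B1) with he | ho
    · exact he.two_dvd
    · exfalso
      obtain ⟨k, hk⟩ := ho
      have hbk : b = 2 * k + 1 - B1 := by omega
      have e : b ^ 2 - B1 ^ 2 = 4 * (k * k + k - k * B1) - 2 * B1 + 1 := by
        rw [hbk]; ring
      rw [e] at h4
      omega
  obtain ⟨w, hw⟩ := hpar
  have hcopA' := hcopA
  obtain ⟨p, q, hpq⟩ := hcopA
  set t : ℤ := -(p * w) with htdef
  have key : B1 + 2 * A1 * t + b = 2 * N * (w * q) := by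
    rw [htdef]; linear_combination hw + (-(2 * w)) * hpq
  set g2 := formAct g1 1 t 0 1 with hg2def
  have hdet2 : (1 : ℤ) * 1 - t * 0 = 1 := by ring
  have hg2 : IsPrimPosDef D g2 := primPosDef_formAct hg1 hD _ _ _ _ hdet2
  have hA2 : g2.1 = A1 := by simp only [hg2def, formAct]; ring_nf; rfl
  have hB2 : g2.2.1 = B1 + 2 * A1 * t := by simp only [hg2def, formAct]; ring
  have hB2b : g2.2.1 + b = 2 * N * (w * q) := by rw [hB2]; linear_combination key
  -- N divides g2.2.2
  have hNC2 : N ∣ g2.2.2 := by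
    obtain ⟨z, hz⟩ : 4 * N ∣ D - b ^ 2 := Int.ModEq.dvd hb
    have hdisc2 : g2.2.1 ^ 2 - 4 * g2.1 * g2.2.2 = D := hg2.2.2
    have h4AC : 4 * N ∣ 4 * (g2.1 * g2.2.2) :=
      ⟨N * (w * q) ^ 2 - (w * q) * b - z,
        by linear_combination (-1) * hdisc2 + (g2.2.1 + 2 * N * (w * q) - b) * hB2b + (-1) * hz⟩
    have hN' : N ∣ g2.1 * g2.2.2 := by
      have h4' : (4 : ℤ) * N ∣ 4 * (g2.1 * g2.2.2) := h4AC
      exact (mul_dvd_mul_iff_left (by norm_num : (4:ℤ) ≠ 0)).mp h4'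
    rw [hA2] at hN'
    exact (hcopA'.symm).dvd_of_dvd_mul_left hN'
  set g3 := formAct g2 0 (-1) 1 0 with hg3def
  have hdet3 : (0 : ℤ) * 0 - (-1) * 1 = 1 := by ring
  have hg3 : IsPrimPosDef D g3 := primPosDef_formAct hg2 hD _ _ _ _ hdet3
  have hA3 : g3.1 = g2.2.2 := by simp only [hg3def, formAct]; ring
  have hB3 : g3.2.1 = -g2.2.1 := by simp only [hg3def, formAct]; ring
  refine ⟨g3, heegner_of_primPosDef hN hfund hg3 (hA3 ▸ hNC2), ?_, ?_⟩
  · have e1 : SL2Equiv g g1 := ⟨x, -v, y, u, hdet1, rfl⟩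
    have e2 : SL2Equiv g1 g2 := ⟨1, t, 0, 1, hdet2, rfl⟩
    have e3 : SL2Equiv g2 g3 := ⟨0, -1, 1, 0, hdet3, rfl⟩
    exact sl2equiv_equivalence.trans (sl2equiv_equivalence.trans e1 e2) e3
  · exact ⟨-(w * q), by rw [hB3]; linear_combination (-1) * hB2b⟩

lemma heegner_sq {N D : ℤ} {f : ℤ × ℤ × ℤ} (hf : IsHeegnerTriple N D f) :
    f.2.1 ^ 2 ≡ D [ZMOD 4 * N] := by
  obtain ⟨-, -, hdisc, ⟨k, hk⟩, -⟩ := hf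
  have : 4 * N ∣ D - f.2.1 ^ 2 := ⟨-(k * f.2.2), by rw [← hdisc, hk]; ring⟩
  exact (Int.modEq_iff_dvd.mpr this)

lemma sl2equiv_sub_equivalence (D : ℤ) :
    Equivalence (fun f g : {f : ℤ × ℤ × ℤ // IsPrimPosDef D f} => SL2Equiv f.val g.val) :=
  ⟨fun f => sl2equiv_equivalence.refl f.val, fun h => sl2equiv_equivalence.symm h,
    fun h1 h2 => sl2equiv_equivalence.trans h1 h2⟩

/-- The map `(A,B,C) ↦ (B mod 2N, [SL₂(ℤ)-class of (A,B,C)])` induces a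
bijection between the set of `Γ₀(N)`-orbits of Heegner forms of level `N` and
discriminant `D` and the product of the set of square roots of `D` modulo `4N`
(taken in `ℤ/2Nℤ`) with the set of `SL₂(ℤ)`-classes of primitive
positive-definite forms of discriminant `D`. -/
theorem heegner_orbits_bijection (N D : ℤ) (hN : 0 < N)
    (hfund : IsFundamentalDiscriminant D) :
    ∃ e : Quot (fun f g : {f : ℤ × ℤ × ℤ // IsHeegnerTriple N D f} =>
            Gamma0Equiv N f.val g.val) ≃
          {p : ZMod (2 * N).toNat ×
              Quot (fun f g : {f : ℤ × ℤ × ℤ // IsPrimPosDef D f} =>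
                SL2Equiv f.val g.val) //
            ∃ b : ℤ, (b : ZMod (2 * N).toNat) = p.1 ∧ b ^ 2 ≡ D [ZMOD 4 * N]},
      ∀ f : {f : ℤ × ℤ × ℤ // IsHeegnerTriple N D f},
        (e (Quot.mk _ f)).val =
          ((f.val.2.1 : ZMod (2 * N).toNat),
            Quot.mk _ ⟨f.val, f.prop.1, f.prop.2.1, f.prop.2.2.1⟩) := by
  have hncast : (((2 * N).toNat : ℕ) : ℤ) = 2 * N := Int.toNat_of_nonneg (by omega)
  set rH := fun f g : {f : ℤ × ℤ × ℤ // IsHeegnerTriple N D f} =>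
    Gamma0Equiv N f.val g.val with hrH
  set rS := fun f g : {f : ℤ × ℤ × ℤ // IsPrimPosDef D f} =>
    SL2Equiv f.val g.val with hrS
  set T := {p : ZMod (2 * N).toNat × Quot rS //
    ∃ b : ℤ, (b : ZMod (2 * N).toNat) = p.1 ∧ b ^ 2 ≡ D [ZMOD 4 * N]} with hT
  set F0 : {f : ℤ × ℤ × ℤ // IsHeegnerTriple N D f} → T := fun f =>
    ⟨((f.val.2.1 : ZMod (2 * N).toNat),
      Quot.mk rS ⟨f.val, f.prop.1, f.prop.2.1, f.prop.2.2.1⟩),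
      ⟨f.val.2.1, rfl, heegner_sq f.prop⟩⟩ with hF0
  have hresp : ∀ f g, rH f g → F0 f = F0 g := by
    rintro f g ⟨a, b, c, d, hdet, hc, heq⟩
    apply Subtype.ext
    apply Prod.ext
    · show ((f.val.2.1 : ZMod (2 * N).toNat)) = (g.val.2.1 : ZMod (2 * N).toNat)
      rw [ZMod.intCast_eq_intCast_iff]
      have hdvd : 2 * N ∣ g.val.2.1 - f.val.2.1 := by
        have := B_congr_gamma0 f.prop.2.2.2.1 a b c d hdet hc
        rwa [heq] at this
      have : f.val.2.1 ≡ g.val.2.1 [ZMOD 2 * N] := Int.modEq_iff_dvd.mpr hdvd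
      rwa [← hncast] at this
    · exact Quot.sound ⟨a, b, c, d, hdet, heq⟩
  set F : Quot rH → T := Quot.lift F0 hresp with hF
  have hred : ∀ f, F (Quot.mk rH f) = F0 f := fun _ => rfl
  have hinj : Function.Injective F := by
    intro q1 q2
    induction q1 using Quot.ind with | _ f =>
    induction q2 using Quot.ind with | _ g =>
    intro h
    rw [hred, hred] at h
    have h' := congrArg Subtype.val h
    rw [hF0] at h'
    simp only [Prod.mk.injEq] at h'
    obtain ⟨h1, h2⟩ := h'
    have hmod : 2 * N ∣ g.val.2.1 - f.val.2.1 := by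
      rw [ZMod.intCast_eq_intCast_iff] at h1
      rw [hncast] at h1
      exact h1.dvd
    have hsl : SL2Equiv f.val g.val :=
      ((sl2equiv_sub_equivalence D).eqvGen_iff).mp (Quot.eq.mp h2)
    obtain ⟨a, b, c, d, hdet, heq⟩ := hsl
    have hc : N ∣ c := by
      refine dvd_c_of_heegner f.prop.2.2.2.1 f.prop.2.1 a b c d hdet ?_ ?_
      · rw [heq]; exact g.prop.2.2.2.1
      · rw [heq]; exact hmod
    exact Quot.sound ⟨a, b, c, d, hdet, hc, heq⟩
  have hsurj : Function.Surjective F := by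
    rintro ⟨⟨β, q⟩, b, hbeq, hbmod⟩
    obtain ⟨gg, rfl⟩ := q.exists_rep
    obtain ⟨h, hH, hSL, hdvd⟩ := exists_heegner_rep hN hfund gg.prop hbmod
    refine ⟨Quot.mk rH ⟨h, hH⟩, ?_⟩
    rw [hred, hF0]
    apply Subtype.ext
    apply Prod.ext
    · show ((h.2.1 : ZMod (2 * N).toNat)) = β
      have hbeq' : (b : ZMod (2 * N).toNat) = β := hbeq
      rw [← hbeq', ZMod.intCast_eq_intCast_iff]
      have : b ≡ h.2.1 [ZMOD 2 * N] := Int.modEq_iff_dvd.mpr hdvd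
      rw [← hncast] at this
      exact this.symm
    · exact Quot.sound (sl2equiv_equivalence.symm hSL)
  refine ⟨Equiv.ofBijective F ⟨hinj, hsurj⟩, fun f => ?_⟩
  have e1 : (Equiv.ofBijective F ⟨hinj, hsurj⟩) (Quot.mk rH f) = F0 f := hred f
  rw [e1, hF0]
end
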